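/- Let f(x) = Σ_{n≥1} a_n x^(2n-1) where a_n is the number of full binary trees with n leaves avoiding the left comb with 4 leaves (so a_n = M(n-1), a Motzkin number). Then the coefficients satisfy the relation encoded by x^3 f^2 + (x^2 - 1) f + x = 0; equivalently, for all n ≥ 2, a_{n+1} = a_n + Σ_{k=1}^{n-1} a_k a_{n-k}, with a_1 = a_2 = 1. -/

import Mathlib

inductive BTree : Type
  | leaf : BTree
  | node : BTree → BTree → BTree
  deriving DecidableEq

namespace BTree

def leaves : BTree → ℕ
  | leaf => 1
  | node l r => leaves l + leaves r

def Matches : BTree → BTree → Bool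
  | _, leaf => true
  | leaf, node _ _ => false
  | node l r, node tl tr => Matches l tl && Matches r tr

def Contains : BTree → BTree → Bool
  | leaf, t => Matches leaf t
  | node l r, t => Matches (node l r) t || Contains l t || Contains r t

def Avoids (T t : BTree) : Prop := Contains T t = false

end BTree

noncomputable def a (n : ℕ) : ℕ :=
  Nat.card {T : BTree //
    T.leaves = n ∧ T.Avoids (.node (.node (.node .leaf .leaf) .leaf) .leaf)}

/-!
A tree avoids the left comb `((•,•),•),•` iff the left child of every left child is a leaf.
So a pattern-avoiding tree with at least two leaves is either `(•, r)` or `((•, s), r)` with `s`, `r`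
pattern-avoiding, and these two shapes give the two terms of `a (n + 1) = a n + ∑ a k * a (n - k)`.
-/

namespace BTree

def leftComb : BTree := .node (.node (.node .leaf .leaf) .leaf) .leaf

lemma avoids_leaf : Avoids .leaf leftComb := rfl

lemma avoids_node_leaf_iff (r : BTree) : Avoids (.node .leaf r) leftComb ↔ Avoids r leftComb := by
  simp [Avoids, Contains, Matches, leftComb]

lemma avoids_node_node_leaf_iff (s r : BTree) :
    Avoids (.node (.node .leaf s) r) leftComb ↔ Avoids s leftComb ∧ Avoids r leftComb := by
  simp [Avoids, Contains, Matches, leftComb]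

lemma not_avoids_node_node_node (u v w r : BTree) :
    ¬ Avoids (.node (.node (.node u v) w) r) leftComb := by
  simp [Avoids, Contains, Matches, leftComb]

lemma one_le_leaves (T : BTree) : 1 ≤ T.leaves := by
  induction T with
  | leaf => rfl
  | node l r _ ihr => simp only [leaves]; omega

lemma eq_leaf_of_leaves_eq_one {T : BTree} (h : T.leaves = 1) : T = .leaf := by
  cases T with
  | leaf => rfl
  | node l r => have := one_le_leaves l; have := one_le_leaves r; simp only [leaves] at h; omega

def avoiding : ℕ → Finset BTree
  | 0 => ∅
  | 1 => {.leaf}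
  | n + 2 =>
      (avoiding (n + 1)).image (node .leaf) ∪
      (Finset.Icc 1 n).attach.biUnion fun k =>
        (avoiding k.1 ×ˢ avoiding (n + 1 - k.1)).image fun p => .node (.node .leaf p.1) p.2
  decreasing_by
  all_goals first | omega | have := Finset.mem_Icc.mp k.2; omega

lemma leaves_add_two_and_avoids_iff (m : ℕ) (T : BTree) :
    T.leaves = m + 2 ∧ Avoids T leftComb ↔
      (∃ r, (r.leaves = m + 1 ∧ Avoids r leftComb) ∧ node .leaf r = T) ∨
      ∃ k ∈ Finset.Icc 1 m, ∃ s r, (s.leaves = k ∧ Avoids s leftComb) ∧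
        (r.leaves = m + 1 - k ∧ Avoids r leftComb) ∧ node (node .leaf s) r = T := by
  constructor
  · rintro ⟨hT, hav⟩
    match T, hav with
    | .leaf, _ => simp [leaves] at hT
    | .node .leaf r, hav =>
      simp only [leaves] at hT
      exact .inl ⟨r, ⟨by omega, (avoids_node_leaf_iff r).mp hav⟩, rfl⟩
    | .node (.node .leaf s) r, hav =>
      have := one_le_leaves s
      have := one_le_leaves r
      simp only [leaves] at hT
      obtain ⟨hs, hr⟩ := (avoids_node_node_leaf_iff s r).mp hav
      exact .inr ⟨s.leaves, Finset.mem_Icc.mpr ⟨by omega, by omega⟩, s, r, ⟨rfl, hs⟩,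
        ⟨by omega, hr⟩, rfl⟩
    | .node (.node (.node u v) w) r, hav => exact absurd hav (not_avoids_node_node_node u v w r)
  · rintro (⟨r, ⟨hr, hav⟩, rfl⟩ | ⟨k, hk, s, r, ⟨hs, havs⟩, ⟨hr, havr⟩, rfl⟩)
    · exact ⟨by simp only [leaves]; omega, (avoids_node_leaf_iff r).mpr hav⟩
    · have := Finset.mem_Icc.mp hk
      exact ⟨by simp only [leaves]; omega, (avoids_node_node_leaf_iff s r).mpr ⟨havs, havr⟩⟩

lemma mem_avoiding_iff (n : ℕ) (T : BTree) :
    T ∈ avoiding n ↔ T.leaves = n ∧ Avoids T leftComb := by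
  induction n using Nat.strong_induction_on generalizing T with
  | _ n ih =>
    match n with
    | 0 =>
      simp only [avoiding, Finset.notMem_empty, false_iff, not_and]
      have := one_le_leaves T
      omega
    | 1 =>
      simp only [avoiding, Finset.mem_singleton]
      exact ⟨by rintro rfl; exact ⟨rfl, avoids_leaf⟩, fun h => eq_leaf_of_leaves_eq_one h.1⟩
    | m + 2 =>
      rw [leaves_add_two_and_avoids_iff, avoiding]
      simp only [Finset.mem_union, Finset.mem_image, Finset.mem_biUnion, Finset.mem_attach,
        true_and, Subtype.exists, Finset.mem_product, Prod.exists, exists_prop]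
      refine or_congr (exists_congr fun r => and_congr_left' (ih _ (by omega) r))
        (exists_congr fun k => and_congr_right fun hk => exists₂_congr fun s r => ?_)
      have := Finset.mem_Icc.mp hk
      rw [ih k (by omega), ih (m + 1 - k) (by omega), and_assoc]

lemma card_avoiding_add_two (m : ℕ) :
    (avoiding (m + 2)).card =
      (avoiding (m + 1)).card + ∑ k ∈ Finset.Icc 1 m, (avoiding k).card * (avoiding (m + 1 - k)).card := by
  have node_leaf_injective : Function.Injective (node .leaf) := fun _ _ h => by injection h
  have graft_injective :
      Function.Injective fun p : BTree × BTree => node (node .leaf p.1) p.2 := by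
    rintro ⟨s, r⟩ ⟨s', r'⟩ h
    injection h with hl hr
    injection hl with _ hs
    exact Prod.ext hs hr
  rw [avoiding, Finset.card_union_of_disjoint, Finset.card_image_of_injective _ node_leaf_injective,
    Finset.card_biUnion, ← Finset.sum_attach (Finset.Icc 1 m)]
  · simp only [Finset.card_image_of_injective _ graft_injective, Finset.card_product]
  · intro k _ k' _ hne
    simp only [Function.onFun, Finset.disjoint_left, Finset.mem_image, Finset.mem_product]
    rintro _ ⟨⟨s, r⟩, ⟨hs, -⟩, rfl⟩ ⟨⟨s', r'⟩, ⟨hs', -⟩, h⟩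
    injection h with hl
    injection hl with _ hss
    subst hss
    exact hne (Subtype.ext (((mem_avoiding_iff k s').mp hs).1.symm.trans
      ((mem_avoiding_iff k' s').mp hs').1))
  · simp only [Finset.disjoint_left, Finset.mem_image, Finset.mem_biUnion]
    rintro _ ⟨r, -, rfl⟩ ⟨k, -, p, -, h⟩
    injection h with hl
    injection hl

end BTree

open BTree

lemma a_eq_card_avoiding (n : ℕ) : a n = (avoiding n).card := by
  change Nat.card {T : BTree // T.leaves = n ∧ T.Avoids leftComb} = _
  rw [Nat.card_congr (Equiv.subtypeEquivRight fun T => (mem_avoiding_iff n T).symm),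
    Nat.card_eq_finsetCard]

lemma a_add_two (m : ℕ) :
    a (m + 2) = a (m + 1) + ∑ k ∈ Finset.Icc 1 m, a k * a (m + 1 - k) := by
  simp only [a_eq_card_avoiding, card_avoiding_add_two]

/-- The coefficient recurrence encoded by `x³f² + (x²-1)f + x = 0` for
`f(x) = Σ_{n≥1} a_n x^(2n-1)`. -/
theorem stmt_19 :
    a 1 = 1 ∧ a 2 = 1 ∧
    ∀ n : ℕ, 2 ≤ n →
      a (n + 1) = a n + ∑ k ∈ Finset.Icc 1 (n - 1), a k * a (n - k) := by
  have a_one : a 1 = 1 := by simp [a_eq_card_avoiding, avoiding]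
  refine ⟨a_one, by simp [a_add_two 0, a_one], fun n hn => ?_⟩
  obtain ⟨m, rfl⟩ : ∃ m, n = m + 1 := ⟨n - 1, by omega⟩
  exact a_add_two m
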